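/- arXiv:1701.01538 — 10 statements merged into one kernel-verified Lean document; each statement's English description precedes it below -/
import Mathlib

section
/- Let Λ be a finite multiset of vectors in ℝⁿ (thought of as coordinates in a fundamental weight basis) that is invariant under the simple reflection s_i defined by s_i(μ) = μ - μ_i · a_i, where a_i is the i-th row of an n×n integer matrix A with A_{ii} = 2. If A_{ij} = 0, then Σ_{μ∈Λ} μ_i · μ_j = 0. -/
/-- Lemma 4.2: if `A i j = 0` then `∑_{μ ∈ Λ} μ_i μ_j = 0` for any finite multiset `Λ`
of weight-coordinate vectors invariant under the simple reflection `s_i`. -/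
theorem stmt0 (n : ℕ) (A : Matrix (Fin n) (Fin n) ℤ)
    (hdiag : ∀ k, A k k = 2)
    (Λ : Multiset (Fin n → ℝ)) (i j : Fin n)
    (hinv : Multiset.map (fun μ k => μ k - μ i * (A i k : ℝ)) Λ = Λ)
    (hij : A i j = 0) :
    (Λ.map (fun μ => μ i * μ j)).sum = 0 := by
  have key : (Λ.map (fun μ => μ i * μ j)).sum
      = -(Λ.map (fun μ => μ i * μ j)).sum := by
    conv_lhs => rw [← hinv]
    rw [Multiset.map_map]
    have : Multiset.map ((fun μ => μ i * μ j) ∘ fun μ k => μ k - μ i * (A i k : ℝ)) Λ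
        = Multiset.map (fun μ => -(μ i * μ j)) Λ := by
      apply Multiset.map_congr rfl
      intro μ _
      simp only [Function.comp_apply, hdiag i, hij]
      push_cast
      ring
    rw [this]
    simp [Multiset.sum_map_neg']
  linarith
end

section
/- Let Λ be a finite multiset of vectors in ℝⁿ invariant under the simple reflections s_i and s_j associated to an n×n Cartan matrix A with A_{ij} = A_{ji} = -1. Then Σ_{μ∈Λ} μ_i² = Σ_{μ∈Λ} μ_j². -/
/-- Lemma 4.3 (first part): if `A i j = A j i = -1` then `∑ μ_i² = ∑ μ_j²` for a finite
multiset `Λ` invariant under the simple reflections `s_i` and `s_j`. -/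
theorem stmt1 (n : ℕ) (A : Matrix (Fin n) (Fin n) ℤ)
    (hdiag : ∀ k, A k k = 2)
    (Λ : Multiset (Fin n → ℝ)) (i j : Fin n)
    (hij : A i j = -1) (hji : A j i = -1)
    (hinvi : Multiset.map (fun μ k => μ k - μ i * (A i k : ℝ)) Λ = Λ)
    (hinvj : Multiset.map (fun μ k => μ k - μ j * (A j k : ℝ)) Λ = Λ) :
    (Λ.map (fun μ => μ i ^ 2)).sum = (Λ.map (fun μ => μ j ^ 2)).sum := by
  have key : ∀ (g : (Fin n → ℝ) → ℝ) (f : (Fin n → ℝ) → (Fin n → ℝ)),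
      Multiset.map f Λ = Λ →
      (Λ.map g).sum = (Λ.map (fun μ => g (f μ))).sum := by
    intro g f h
    conv_lhs => rw [← h, Multiset.map_map]
    rfl
  have h1 := key (fun μ => μ i * μ j) _ hinvi
  have h2 := key (fun μ => μ i * μ j) _ hinvj
  simp only [hdiag, hij, hji] at h1 h2
  push_cast at h1 h2
  have e1 : (fun μ : Fin n → ℝ => (μ i - μ i * 2) * (μ j - μ i * (-1)))
      = fun μ : Fin n → ℝ => -(μ i * μ j) + -(μ i ^ 2) := by
    funext μ; ring
  have e2 : (fun μ : Fin n → ℝ => (μ i - μ j * (-1)) * (μ j - μ j * 2))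
      = fun μ : Fin n → ℝ => -(μ i * μ j) + -(μ j ^ 2) := by
    funext μ; ring
  rw [e1] at h1
  rw [e2] at h2
  have hadd : ∀ (g h : (Fin n → ℝ) → ℝ),
      (Λ.map (fun μ => g μ + h μ)).sum = (Λ.map g).sum + (Λ.map h).sum := by
    intro g h
    rw [← Multiset.sum_map_add]
  have hneg : ∀ (g : (Fin n → ℝ) → ℝ),
      (Λ.map (fun μ => -(g μ))).sum = -(Λ.map g).sum := by
    intro g
    simp [Multiset.sum_map_neg']
  rw [hadd, hneg, hneg] at h1 h2
  linarith
end

section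
/- Let Λ be a finite multiset of vectors in ℝⁿ invariant under the simple reflection s_i associated to a Cartan matrix A with A_{ij} = -1. Then Σ_{μ∈Λ} μ_i μ_j = -(1/2) Σ_{μ∈Λ} μ_i². -/
/-- Lemma 4.3 (second part): if `A i j = -1` then `∑ μ_i μ_j = -(1/2) ∑ μ_i²` for a finite
multiset `Λ` invariant under the simple reflection `s_i`. -/
theorem stmt2 (n : ℕ) (A : Matrix (Fin n) (Fin n) ℤ)
    (hdiag : ∀ k, A k k = 2)
    (Λ : Multiset (Fin n → ℝ)) (i j : Fin n)
    (hij : A i j = -1)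
    (hinvi : Multiset.map (fun μ k => μ k - μ i * (A i k : ℝ)) Λ = Λ) :
    (Λ.map (fun μ => μ i * μ j)).sum = -(1/2) * (Λ.map (fun μ => μ i ^ 2)).sum := by
  have key : (Λ.map (fun μ => μ i * μ j)).sum
      = (Λ.map (fun μ => -(μ i * μ j) + -(μ i ^ 2))).sum := by
    conv_lhs => rw [← hinvi, Multiset.map_map]
    apply congrArg
    apply Multiset.map_congr rfl
    intro μ _
    simp only [Function.comp_apply, hdiag i, hij]
    push_cast
    ring
  rw [Multiset.sum_map_add] at key
  have h1 : (Λ.map fun μ => -(μ i * μ j)).sum = -(Λ.map fun μ => μ i * μ j).sum := by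
    simp [Multiset.sum_map_neg']
  have h2 : (Λ.map fun μ => -(μ i ^ 2)).sum = -(Λ.map fun μ => μ i ^ 2).sum := by
    simp [Multiset.sum_map_neg']
  rw [h1, h2] at key
  linarith
end

section
/- Let Λ be a finite multiset of vectors in ℝⁿ invariant under the simple reflections s_i and s_j associated to a Cartan matrix A with A_{ij} = -1 and A_{ji} = -2 (α_i short, α_j long, connected). Then Σ_{μ∈Λ} μ_i μ_j = -Σ_{μ∈Λ} μ_j² and Σ_{μ∈Λ} μ_i² = 2 Σ_{μ∈Λ} μ_j². -/
/-- Proposition 4.4: the double-bond case, `A i j = -1`, `A j i = -2` (`α_i` short, `α_j` long):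
`∑ μ_i μ_j = -∑ μ_j²` and `∑ μ_i² = 2 ∑ μ_j²`. -/
theorem stmt3 (n : ℕ) (A : Matrix (Fin n) (Fin n) ℤ)
    (hdiag : ∀ k, A k k = 2)
    (Λ : Multiset (Fin n → ℝ)) (i j : Fin n)
    (hij : A i j = -1) (hji : A j i = -2)
    (hinvi : Multiset.map (fun μ k => μ k - μ i * (A i k : ℝ)) Λ = Λ)
    (hinvj : Multiset.map (fun μ k => μ k - μ j * (A j k : ℝ)) Λ = Λ) :
    (Λ.map (fun μ => μ i * μ j)).sum = -(Λ.map (fun μ => μ j ^ 2)).sum ∧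
    (Λ.map (fun μ => μ i ^ 2)).sum = 2 * (Λ.map (fun μ => μ j ^ 2)).sum := by
  set Sii := (Λ.map (fun μ => μ i ^ 2)).sum with hSii
  set Sjj := (Λ.map (fun μ => μ j ^ 2)).sum with hSjj
  set Sij := (Λ.map (fun μ => μ i * μ j)).sum with hSij
  have h1 : (Λ.map (fun μ => (μ j + μ i) ^ 2)).sum = Sjj := by
    conv_rhs => rw [hSjj, ← hinvi]
    rw [Multiset.map_map]
    congr 1
    ext μ
    simp [hij]
  have h2 : (Λ.map (fun μ => (μ i + 2 * μ j) ^ 2)).sum = Sii := by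
    conv_rhs => rw [hSii, ← hinvj]
    rw [Multiset.map_map]
    refine congrArg _ (Multiset.map_congr rfl fun μ _ => ?_)
    simp [hji]; ring
  have e1 : (Λ.map (fun μ => (μ j + μ i) ^ 2)).sum
      = Sjj + 2 * Sij + Sii := by
    have : (fun μ : Fin n → ℝ => (μ j + μ i) ^ 2)
        = fun μ => (μ j ^ 2 + 2 * (μ i * μ j)) + μ i ^ 2 := by
      funext μ; ring
    rw [this, Multiset.sum_map_add, Multiset.sum_map_add,
      Multiset.sum_map_mul_left]
  have e2 : (Λ.map (fun μ => (μ i + 2 * μ j) ^ 2)).sum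
      = Sii + 4 * Sij + 4 * Sjj := by
    have : (fun μ : Fin n → ℝ => (μ i + 2 * μ j) ^ 2)
        = fun μ => (μ i ^ 2 + 4 * (μ i * μ j)) + 4 * μ j ^ 2 := by
      funext μ; ring
    rw [this, Multiset.sum_map_add, Multiset.sum_map_add,
      Multiset.sum_map_mul_left, Multiset.sum_map_mul_left]
  rw [e1] at h1
  rw [e2] at h2
  constructor <;> linarith
end

section
/- Let Λ be a finite multiset of vectors in ℝ² invariant under the two simple reflections of the G₂ Cartan matrix A = [[2,-1],[-3,2]]. Then Σ_{μ∈Λ} μ_1² = -2 Σ_{μ∈Λ} μ_1 μ_2 = 3 Σ_{μ∈Λ} μ_2². -/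
/-- Proposition 4.5 (`G₂`): for a finite multiset `Λ ⊆ ℝ²` invariant under the two simple
reflections of the `G₂` Cartan matrix `[[2,-1],[-3,2]]`,
`∑ μ₁² = -2 ∑ μ₁ μ₂ = 3 ∑ μ₂²`. -/
theorem stmt4 (Λ : Multiset (ℝ × ℝ))
    (hinv1 : Λ.map (fun μ => (-μ.1, μ.1 + μ.2)) = Λ)
    (hinv2 : Λ.map (fun μ => (μ.1 + 3 * μ.2, -μ.2)) = Λ) :
    (Λ.map (fun μ => μ.1 ^ 2)).sum = -2 * (Λ.map (fun μ => μ.1 * μ.2)).sum ∧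
    -2 * (Λ.map (fun μ => μ.1 * μ.2)).sum = 3 * (Λ.map (fun μ => μ.2 ^ 2)).sum := by
  have h1 := congrArg (fun M => (M.map (fun μ : ℝ × ℝ => μ.1 * μ.2)).sum) hinv1
  have h2 := congrArg (fun M => (M.map (fun μ : ℝ × ℝ => μ.1 * μ.2)).sum) hinv2
  simp only [Multiset.map_map, Function.comp] at h1 h2
  have e1 : (Λ.map (fun μ : ℝ × ℝ => -μ.1 * (μ.1 + μ.2))).sum
      = -(Λ.map (fun μ => μ.1 ^ 2)).sum - (Λ.map (fun μ => μ.1 * μ.2)).sum := by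
    have e : (fun μ : ℝ × ℝ => -μ.1 * (μ.1 + μ.2)) = fun μ => -(μ.1 ^ 2) - μ.1 * μ.2 := by
      ext μ; ring
    rw [e, Multiset.sum_map_sub]
    simp [Multiset.sum_map_neg]
  have e2 : (Λ.map (fun μ : ℝ × ℝ => (μ.1 + 3 * μ.2) * -μ.2)).sum
      = -(Λ.map (fun μ => μ.1 * μ.2)).sum - 3 * (Λ.map (fun μ => μ.2 ^ 2)).sum := by
    have e : (fun μ : ℝ × ℝ => (μ.1 + 3 * μ.2) * -μ.2) = fun μ => -(μ.1 * μ.2) - 3 * μ.2 ^ 2 := by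
      ext μ; ring
    rw [e, Multiset.sum_map_sub, Multiset.sum_map_mul_left]
    simp [Multiset.sum_map_neg]
  rw [e1] at h1
  rw [e2] at h2
  constructor <;> linarith
end

section
/- Let Λ be a finite multiset of vectors in ℝⁿ invariant under the Weyl group of a simply-laced irreducible root system (acting via s_i(μ)_k = μ_k - μ_i A_{ik} for the Cartan matrix A). Then the symmetric matrix S(Λ) with entries S(Λ)_{ij} = Σ_{μ∈Λ} μ_i μ_j equals (1/2)(Σ_{μ∈Λ} μ_1²) · A. -/
/-- Theorem 1.2 in the simply-laced case: if `A` is the Cartan matrix of a simply-laced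
irreducible root system (diagonal `2`, off-diagonal entries `0` or `-1`, symmetric, connected
Dynkin diagram) and `Λ` is a finite multiset of weight vectors invariant under every simple
reflection, then `∑_{μ∈Λ} μ_i μ_j = (1/2)(∑_{μ∈Λ} μ_1²) · A i j`. -/
theorem stmt6 (n : ℕ) (hn : 0 < n) (A : Matrix (Fin n) (Fin n) ℤ)
    (hdiag : ∀ k, A k k = 2)
    (hoff : ∀ k l, k ≠ l → A k l = 0 ∨ A k l = -1)
    (hsymm : ∀ k l, A k l = A l k)
    (hconn : (SimpleGraph.fromRel (fun k l => A k l ≠ 0)).Connected)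
    (Λ : Multiset (Fin n → ℝ))
    (hinv : ∀ k : Fin n, Multiset.map (fun μ m => μ m - μ k * (A k m : ℝ)) Λ = Λ) :
    ∀ i j, (Λ.map (fun μ => μ i * μ j)).sum
      = 1 / 2 * (Λ.map (fun μ => μ ⟨0, hn⟩ ^ 2)).sum * (A i j : ℝ) := by
  set S : Fin n → Fin n → ℝ := fun i j => (Λ.map (fun μ => μ i * μ j)).sum with hS
  have Ssymm : ∀ i j, S i j = S j i := by
    intro i j
    simp only [hS]
    exact congrArg Multiset.sum (Multiset.map_congr rfl (fun μ _ => mul_comm _ _))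
  have key : ∀ k i j : Fin n,
      S i j - (A k i : ℝ) * S k j - (A k j : ℝ) * S i k
        + (A k i : ℝ) * (A k j : ℝ) * S k k = S i j := by
    intro k i j
    have h := congrArg (fun M => (M.map (fun μ => μ i * μ j)).sum) (hinv k)
    simp only [Multiset.map_map, Function.comp] at h
    have expand : (Λ.map (fun μ => (μ i - μ k * (A k i : ℝ)) * (μ j - μ k * (A k j : ℝ)))).sum
        = S i j - (A k i : ℝ) * S k j - (A k j : ℝ) * S i k
          + (A k i : ℝ) * (A k j : ℝ) * S k k := by
      have : (Λ.map (fun μ => (μ i - μ k * (A k i : ℝ)) * (μ j - μ k * (A k j : ℝ))))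
          = (Λ.map (fun μ => μ i * μ j - (A k i : ℝ) * (μ k * μ j)
              - (A k j : ℝ) * (μ i * μ k) + (A k i : ℝ) * (A k j : ℝ) * (μ k * μ k))) :=
        Multiset.map_congr rfl (fun μ _ => by ring)
      rw [this]
      simp only [hS]
      rw [show (Λ.map (fun μ => μ i * μ j - (A k i : ℝ) * (μ k * μ j)
              - (A k j : ℝ) * (μ i * μ k) + (A k i : ℝ) * (A k j : ℝ) * (μ k * μ k)))
          = (Λ.map (fun μ => (μ i * μ j - (A k i : ℝ) * (μ k * μ j)
              - (A k j : ℝ) * (μ i * μ k)) + (A k i : ℝ) * (A k j : ℝ) * (μ k * μ k)))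
          from rfl, Multiset.sum_map_add]
      rw [show (Λ.map (fun μ => (μ i * μ j - (A k i : ℝ) * (μ k * μ j)
              - (A k j : ℝ) * (μ i * μ k))))
          = (Λ.map (fun μ => (μ i * μ j - (A k i : ℝ) * (μ k * μ j))
              - (A k j : ℝ) * (μ i * μ k)))
          from rfl, Multiset.sum_map_sub, Multiset.sum_map_sub]
      rw [Multiset.sum_map_mul_left, Multiset.sum_map_mul_left, Multiset.sum_map_mul_left]
    rw [← expand]
    exact h
  have half : ∀ k j : Fin n, S k j = 1 / 2 * (A k j : ℝ) * S k k := by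
    intro k j
    have h := key k k j
    rw [hdiag k] at h
    push_cast at h
    have hkk : S j k = S k j := Ssymm j k
    nlinarith [h, hkk]
  have edge : ∀ k l : Fin n, k ≠ l → A k l ≠ 0 → S k k = S l l := by
    intro k l hne hA
    have hkl : A k l = -1 := (hoff k l hne).resolve_left hA
    have hlk : A l k = -1 := by rw [← hsymm]; exact hkl
    have h1 := half k l
    have h2 := half l k
    rw [hkl] at h1; rw [hlk] at h2
    have := Ssymm k l
    push_cast at h1 h2
    linarith
  have walkeq : ∀ a b : Fin n, (SimpleGraph.fromRel (fun k l => A k l ≠ 0)).Walk a b →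
      S a a = S b b := by
    intro a b w
    induction w with
    | nil => rfl
    | cons hadj p ih =>
      rw [SimpleGraph.fromRel_adj] at hadj
      obtain ⟨hne, hor⟩ := hadj
      rcases hor with h | h
      · rw [edge _ _ hne h]; exact ih
      · rw [edge _ _ hne (by rw [hsymm]; exact h)]; exact ih
  have diag : ∀ k, S k k = S ⟨0, hn⟩ ⟨0, hn⟩ := fun k =>
    (hconn.preconnected k ⟨0, hn⟩).elim (walkeq _ _)
  intro i j
  have goal_eq : (Λ.map (fun μ => μ ⟨0, hn⟩ ^ 2)).sum = S ⟨0, hn⟩ ⟨0, hn⟩ := by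
    simp only [hS]
    exact congrArg Multiset.sum (Multiset.map_congr rfl (fun μ _ => sq (μ ⟨0, hn⟩)))
  show S i j = 1 / 2 * (Λ.map (fun μ => μ ⟨0, hn⟩ ^ 2)).sum * (A i j : ℝ)
  rw [goal_eq, ← diag i, half i j]
  ring
end

section
/- Let Λ be a finite multiset of vectors in ℝⁿ invariant under all simple reflections of the Cartan matrix A of type Bₙ (Bourbaki numbering: α_1,...,α_{n-1} long, α_n short). Set x = Σ_{μ∈Λ} μ_1². Then the matrix S(Λ)_{ij} = Σ_{μ∈Λ} μ_i μ_j equals (x/2)·M, where M is the tridiagonal symmetric matrix with diagonal (2,2,...,2,4), off-diagonal entries -1 except M_{n-1,n} = M_{n,n-1} = -2. -/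
/-- Type `Bₙ` case of Theorem 1.2 (with Proposition 4.4): for `Λ` invariant under all simple
reflections of the `Bₙ` Cartan matrix (Bourbaki numbering, `α_1,…,α_{n-1}` long, `α_n` short),
setting `x = ∑_{μ∈Λ} μ_1²`, the matrix `S(Λ)_{ij} = ∑ μ_i μ_j` equals `(x/2)·M` with `M` the
tridiagonal symmetric matrix with diagonal `(2,…,2,4)` and off-diagonal entries `-1` except
`M_{n-1,n} = M_{n,n-1} = -2`. -/
theorem stmt7 (n : ℕ) (hn : 2 ≤ n) (A : Matrix (Fin n) (Fin n) ℝ)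
    (hA : ∀ i j : Fin n, A i j =
      if i = j then 2
      else if (i : ℕ) + 1 = (j : ℕ) ∧ (j : ℕ) = n - 1 then -2
      else if (i : ℕ) + 1 = (j : ℕ) ∨ (j : ℕ) + 1 = (i : ℕ) then -1
      else 0)
    (Λ : Multiset (Fin n → ℝ))
    (hinv : ∀ k : Fin n, Multiset.map (fun μ m => μ m - μ k * A k m) Λ = Λ)
    (x : ℝ) (hx : x = (Λ.map (fun μ => μ ⟨0, by omega⟩ ^ 2)).sum) :
    ∀ i j : Fin n, (Λ.map (fun μ => μ i * μ j)).sum = x / 2 *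
      (if i = j then (if (i : ℕ) = n - 1 then 4 else 2)
       else if ((i : ℕ) + 1 = (j : ℕ) ∧ (j : ℕ) = n - 1) ∨
               ((j : ℕ) + 1 = (i : ℕ) ∧ (i : ℕ) = n - 1) then -2
       else if (i : ℕ) + 1 = (j : ℕ) ∨ (j : ℕ) + 1 = (i : ℕ) then -1
       else 0) := by
  set S : Fin n → Fin n → ℝ := fun a b => (Λ.map (fun μ => μ a * μ b)).sum with hSdef
  have hsymm : ∀ a b : Fin n, S a b = S b a := by
    intro a b
    simp only [hSdef]
    exact congrArg Multiset.sum (Multiset.map_congr rfl (fun μ _ => mul_comm _ _))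
  have key : ∀ k l : Fin n, 2 * S k l = A k l * S k k := by
    intro k l
    have h2 : (Multiset.map ((fun μ => μ k * μ l) ∘ (fun (μ : Fin n → ℝ) m => μ m - μ k * A k m)) Λ).sum
        = S k l := by
      rw [← Multiset.map_map, hinv k]
    have hAkk : A k k = 2 := by rw [hA]; rw [if_pos rfl]
    have hfun : ((fun μ => μ k * μ l) ∘ (fun (μ : Fin n → ℝ) m => μ m - μ k * A k m))
        = fun μ => A k l * (μ k * μ k) + (-1) * (μ k * μ l) := by
      funext μ
      simp only [Function.comp]
      rw [hAkk]; ring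
    rw [hfun, Multiset.sum_map_add, Multiset.sum_map_mul_left, Multiset.sum_map_mul_left] at h2
    simp only [hSdef] at h2 ⊢
    linarith
  have rel : ∀ a b : Fin n, A a b * S a a = A b a * S b b := by
    intro a b
    have h1 := key a b
    have h2 := key b a
    have h3 := hsymm a b
    linarith
  -- values of A on adjacent pairs
  have hAadj : ∀ a b : Fin n, (a : ℕ) + 1 = (b : ℕ) →
      A a b = (if (b : ℕ) = n - 1 then -2 else -1) ∧ A b a = -1 := by
    intro a b hab
    constructor
    · rw [hA, if_neg (fun h => by rw [h] at hab; omega)]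
      by_cases hb : (b : ℕ) = n - 1
      · rw [if_pos ⟨hab, hb⟩, if_pos hb]
      · rw [if_neg (fun h => hb h.2), if_pos (Or.inl hab), if_neg hb]
    · rw [hA, if_neg (fun h => by rw [h] at hab; omega),
        if_neg (by omega), if_pos (Or.inr hab)]
  have diag : ∀ m : ℕ, (hm : m < n - 1) → S ⟨m, by omega⟩ ⟨m, by omega⟩ = x := by
    intro m
    induction m with
    | zero =>
      intro _
      rw [hx]
      exact congrArg Multiset.sum (Multiset.map_congr rfl (fun μ _ => (pow_two _).symm))
    | succ m ih =>
      intro hm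
      have hmn : m < n - 1 := by omega
      have hadj := hAadj ⟨m, by omega⟩ ⟨m + 1, by omega⟩ rfl
      have hb : ((⟨m + 1, by omega⟩ : Fin n) : ℕ) ≠ n - 1 := by simpa using (by omega : m + 1 ≠ n - 1)
      rw [if_neg hb] at hadj
      have hr := rel ⟨m, by omega⟩ ⟨m + 1, by omega⟩
      rw [hadj.1, hadj.2, ih hmn] at hr
      linarith
  have hlast : S ⟨n - 1, by omega⟩ ⟨n - 1, by omega⟩ = 2 * x := by
    have hadj := hAadj ⟨n - 2, by omega⟩ ⟨n - 1, by omega⟩ (by simp; omega)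
    rw [if_pos (by simp)] at hadj
    have hr := rel ⟨n - 2, by omega⟩ ⟨n - 1, by omega⟩
    rw [hadj.1, hadj.2, diag (n - 2) (by omega)] at hr
    linarith
  -- diagonal for general Fin index
  have diagF : ∀ a : Fin n, (a : ℕ) < n - 1 → S a a = x := by
    intro a ha
    have : a = ⟨(a : ℕ), by omega⟩ := Fin.ext rfl
    rw [this]
    exact diag _ ha
  intro i j
  have hkey := key i j
  by_cases hij : i = j
  · subst hij
    rw [if_pos rfl]
    by_cases hi : (i : ℕ) = n - 1
    · rw [if_pos hi, show i = ⟨n - 1, by omega⟩ from Fin.ext hi]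
      show S _ _ = _
      rw [hlast]; ring
    · rw [if_neg hi]
      show S i i = _
      rw [diagF i (by omega)]; ring
  · rw [if_neg hij]
    have hvij : (i : ℕ) ≠ (j : ℕ) := fun h => hij (Fin.ext h)
    show S i j = _
    by_cases hc1 : (i : ℕ) + 1 = (j : ℕ) ∧ (j : ℕ) = n - 1
    · rw [if_pos (Or.inl hc1)]
      rw [hA, if_neg hij, if_pos hc1] at hkey
      have hii : (i : ℕ) < n - 1 := by omega
      rw [diagF i hii] at hkey
      linarith
    · by_cases hc2 : (j : ℕ) + 1 = (i : ℕ) ∧ (i : ℕ) = n - 1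
      · rw [if_pos (Or.inr hc2)]
        rw [hA, if_neg hij, if_neg (by omega), if_pos (Or.inr hc2.1)] at hkey
        have hii : S i i = 2 * x := by
          rw [show i = ⟨n - 1, by omega⟩ from Fin.ext hc2.2]; exact hlast
        rw [hii] at hkey
        linarith
      · rw [if_neg (by tauto)]
        by_cases hc3 : (i : ℕ) + 1 = (j : ℕ) ∨ (j : ℕ) + 1 = (i : ℕ)
        · rw [if_pos hc3]
          rw [hA, if_neg hij, if_neg hc1, if_pos hc3] at hkey
          have hii : (i : ℕ) < n - 1 := by
            have hjlt : (j : ℕ) < n := j.isLt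
            have hilt : (i : ℕ) < n := i.isLt
            omega
          rw [diagF i hii] at hkey
          linarith
        · rw [if_neg hc3]
          rw [hA, if_neg hij, if_neg hc1, if_neg hc3] at hkey
          linarith
end

section
/- Let Λ be a finite multiset of vectors in ℝ² invariant under both simple reflections of the G₂ Cartan matrix [[2,-1],[-3,2]], and set x = Σ_{μ∈Λ} μ_2² (α_2 the long root). Then the matrix S(Λ) with entries S(Λ)_{ij} = Σ_{μ∈Λ} μ_i μ_j equals (x/2)·[[6,-3],[-3,2]], and if x ≠ 0 its inverse is (2/(3x))·[[2,3],[3,6]]. -/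
private lemma stmt8_neg_sum (s : Multiset (ℝ × ℝ)) (f : ℝ × ℝ → ℝ) :
    (s.map (fun μ => -(f μ))).sum = -(s.map f).sum := by
  rw [show (fun μ => -(f μ)) = (Neg.neg ∘ f) from rfl, ← Multiset.map_map,
    Multiset.sum_map_neg']

/-- Proposition 4.5 with the explicit inversion: for a `G₂`-invariant multiset `Λ ⊆ ℝ²` and
`x = ∑ μ₂²`, the matrix `S(Λ)` equals `(x/2)·[[6,-3],[-3,2]]`, and if `x ≠ 0` its inverse is
`(2/(3x))·[[2,3],[3,6]]`. -/
theorem stmt8 (Λ : Multiset (ℝ × ℝ))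
    (hinv1 : Λ.map (fun μ => (-μ.1, μ.1 + μ.2)) = Λ)
    (hinv2 : Λ.map (fun μ => (μ.1 + 3 * μ.2, -μ.2)) = Λ)
    (x : ℝ) (hx : x = (Λ.map (fun μ => μ.2 ^ 2)).sum)
    (SΛ : Matrix (Fin 2) (Fin 2) ℝ)
    (hS : SΛ = !![(Λ.map (fun μ => μ.1 * μ.1)).sum, (Λ.map (fun μ => μ.1 * μ.2)).sum;
                  (Λ.map (fun μ => μ.2 * μ.1)).sum, (Λ.map (fun μ => μ.2 * μ.2)).sum]) :
    SΛ = (x / 2) • !![(6:ℝ), -3; -3, 2] ∧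
    (x ≠ 0 → SΛ * ((2 / (3 * x)) • !![(2:ℝ), 3; 3, 6]) = 1 ∧
             ((2 / (3 * x)) • !![(2:ℝ), 3; 3, 6]) * SΛ = 1) := by
  set a := (Λ.map (fun μ => μ.1 * μ.1)).sum with ha
  set b := (Λ.map (fun μ => μ.1 * μ.2)).sum with hb
  set c := (Λ.map (fun μ => μ.2 * μ.2)).sum with hc
  have hxc : x = c := by
    rw [hx, hc]; congr 1; apply Multiset.map_congr rfl; intro μ _; ring
  -- from s1 invariance: b = -a - b
  have h1 : b = -a + -b := by
    conv_lhs => rw [hb, ← hinv1, Multiset.map_map]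
    have : ((fun μ : ℝ × ℝ => μ.1 * μ.2) ∘ fun μ => (-μ.1, μ.1 + μ.2))
        = fun μ : ℝ × ℝ => -(μ.1 * μ.1) + -(μ.1 * μ.2) := by
      funext μ; simp [Function.comp]; ring
    rw [this, Multiset.sum_map_add, stmt8_neg_sum, stmt8_neg_sum]
  -- from s2 invariance: b = -b - 3c
  have h2 : b = -b + -(3 * c) := by
    conv_lhs => rw [hb, ← hinv2, Multiset.map_map]
    have : ((fun μ : ℝ × ℝ => μ.1 * μ.2) ∘ fun μ => (μ.1 + 3 * μ.2, -μ.2))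
        = fun μ : ℝ × ℝ => -(μ.1 * μ.2) + -(3 * (μ.2 * μ.2)) := by
      funext μ; simp [Function.comp]; ring
    rw [this, Multiset.sum_map_add, stmt8_neg_sum, stmt8_neg_sum,
      ← Multiset.sum_map_mul_left]
  have hbc : b = -(3 / 2) * c := by linarith
  have hac : a = 3 * c := by linarith
  have hba : (Λ.map (fun μ => μ.2 * μ.1)).sum = b := by
    rw [hb]; congr 1; apply Multiset.map_congr rfl; intro μ _; ring
  have hSeq : SΛ = (x / 2) • !![(6:ℝ), -3; -3, 2] := by
    rw [hS, hba, hbc, hac, hxc]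
    ext i j
    fin_cases i <;> fin_cases j <;>
      simp [Matrix.smul_apply] <;> ring
  refine ⟨hSeq, fun hx0 => ?_⟩
  constructor <;>
  · rw [hSeq]
    ext i j
    fin_cases i <;> fin_cases j <;>
      simp [Matrix.mul_apply, Fin.sum_univ_two, Matrix.one_apply] <;>
      field_simp <;> ring
end

section
/- Let Λ be a finite multiset of vectors in ℝⁿ invariant under all simple reflections of an irreducible Cartan matrix A (of finite type), and suppose α_i and α_j are two long simple roots. Then Σ_{μ∈Λ} μ_i² = Σ_{μ∈Λ} μ_j². -/
/-!
A simple reflection `s_k` fixes `Λ`, so it fixes `∑ μ_m²`; expanding `(μ_m - μ_k A_{km})²` gives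
`2 A_{km} ∑ μ_k μ_m = A_{km}² ∑ μ_k²`. For an edge `k — l` of the Dynkin diagram both `A_{kl}` and
`A_{lk}` are nonzero, and comparing the two identities yields `A_{kl} S_k = A_{lk} S_l`, where
`S_k = ∑ μ_k²`. Since `A_{kl} / A_{lk} = ‖α_k‖² / ‖α_l‖²`, this says that `S_k ‖α_k‖²` takes the
same value at both ends of every edge, hence is constant on the connected diagram. Long roots
have equal length, so `S_i = S_j`.
-/

open Multiset

section Reflection

variable {ι R : Type*} [CommRing R]

theorem two_mul_sum_mul_eq_of_map_reflection_eq {Λ : Multiset (ι → R)} {k : ι} {c : ι → R}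
    (h : Λ.map (fun μ m => μ m - μ k * c m) = Λ) (m : ι) :
    2 * c m * (Λ.map fun μ => μ k * μ m).sum = c m ^ 2 * (Λ.map fun μ => μ k ^ 2).sum := by
  have hsq := congrArg (fun s => (s.map fun μ => μ m ^ 2).sum) h
  simp only [map_map, Function.comp_def] at hsq
  have hexp : (Λ.map fun μ => (μ m - μ k * c m) ^ 2 + 2 * c m * (μ k * μ m)).sum
      = (Λ.map fun μ => μ m ^ 2 + c m ^ 2 * μ k ^ 2).sum :=
    congrArg sum (map_congr rfl fun μ _ => by ring)
  rw [sum_map_add, sum_map_add, sum_map_mul_left, sum_map_mul_left, hsq] at hexp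
  exact add_left_cancel hexp

theorem mul_sum_sq_eq_of_map_reflection_eq [IsDomain R] {Λ : Multiset (ι → R)} (A : Matrix ι ι R)
    (hinv : ∀ k, Λ.map (fun μ m => μ m - μ k * A k m) = Λ) {k l : ι}
    (hkl : A k l ≠ 0) (hlk : A l k ≠ 0) :
    A k l * (Λ.map fun μ => μ k ^ 2).sum = A l k * (Λ.map fun μ => μ l ^ 2).sum := by
  have hcomm : (Λ.map fun μ => μ l * μ k).sum = (Λ.map fun μ => μ k * μ l).sum :=
    congrArg sum (map_congr rfl fun μ _ => mul_comm _ _)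
  have hk := two_mul_sum_mul_eq_of_map_reflection_eq (hinv k) l
  have hl := two_mul_sum_mul_eq_of_map_reflection_eq (hinv l) k
  rw [hcomm] at hl
  have ek : 2 * (Λ.map fun μ => μ k * μ l).sum = A k l * (Λ.map fun μ => μ k ^ 2).sum :=
    mul_left_cancel₀ hkl (by linear_combination hk)
  have el : 2 * (Λ.map fun μ => μ k * μ l).sum = A l k * (Λ.map fun μ => μ l ^ 2).sum :=
    mul_left_cancel₀ hlk (by linear_combination hl)
  exact ek.symm.trans el

end Reflection

theorem SimpleGraph.Reachable.eq_of_forall_adj {V β : Type*} {G : SimpleGraph V} {f : V → β}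
    (hf : ∀ u v, G.Adj u v → f u = f v) {u v : V} (h : G.Reachable u v) : f u = f v := by
  obtain ⟨w⟩ := h
  induction w with
  | nil => rfl
  | cons hadj _ ih => exact (hf _ _ hadj).trans ih

section Cartan

variable {ι E : Type*} [NormedAddCommGroup E] [InnerProductSpace ℝ E] {α : ι → E}
  {A : Matrix ι ι ℝ}

theorem cartan_ne_zero_iff (hA : ∀ k l, A k l = 2 * inner ℝ (α k) (α l) / inner ℝ (α l) (α l))
    {k l : ι} : A k l ≠ 0 ↔ inner ℝ (α k) (α l) ≠ 0 := by
  rw [hA, real_inner_self_eq_norm_sq]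
  constructor
  · rintro h hkl
    simp [hkl] at h
  · intro hkl
    have hl : α l ≠ 0 := fun h0 => hkl (by simp [h0])
    exact div_ne_zero (mul_ne_zero two_ne_zero hkl) (by positivity)

theorem cartan_mul_norm_sq_eq (hA : ∀ k l, A k l = 2 * inner ℝ (α k) (α l) / inner ℝ (α l) (α l))
    {k l : ι} (hkl : inner ℝ (α k) (α l) ≠ 0) :
    A k l * ‖α l‖ ^ 2 = A l k * ‖α k‖ ^ 2 := by
  have hk : α k ≠ 0 := fun h0 => hkl (by simp [h0])
  have hl : α l ≠ 0 := fun h0 => hkl (by simp [h0])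
  rw [hA, hA, real_inner_self_eq_norm_sq, real_inner_self_eq_norm_sq, real_inner_comm]
  field_simp

theorem sum_sq_mul_norm_sq_eq_of_cartan_ne_zero
    (hA : ∀ k l, A k l = 2 * inner ℝ (α k) (α l) / inner ℝ (α l) (α l))
    {Λ : Multiset (ι → ℝ)} (hinv : ∀ k, Λ.map (fun μ m => μ m - μ k * A k m) = Λ) {k l : ι}
    (hadj : A k l ≠ 0 ∨ A l k ≠ 0) :
    (Λ.map fun μ => μ k ^ 2).sum * ‖α k‖ ^ 2 = (Λ.map fun μ => μ l ^ 2).sum * ‖α l‖ ^ 2 := by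
  have hkl : inner ℝ (α k) (α l) ≠ 0 := by
    rcases hadj with h | h
    · exact (cartan_ne_zero_iff hA).mp h
    · rw [real_inner_comm]; exact (cartan_ne_zero_iff hA).mp h
  have hlk : inner ℝ (α l) (α k) ≠ 0 := by rwa [real_inner_comm]
  have hAkl : A k l ≠ 0 := (cartan_ne_zero_iff hA).mpr hkl
  have hS := mul_sum_sq_eq_of_map_reflection_eq A hinv hAkl ((cartan_ne_zero_iff hA).mpr hlk)
  apply mul_left_cancel₀ hAkl
  linear_combination ‖α k‖ ^ 2 * hS - (Λ.map fun μ => μ l ^ 2).sum * cartan_mul_norm_sq_eq hA hkl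

end Cartan

theorem stmt15_general (n : ℕ) (E : Type*) [NormedAddCommGroup E] [InnerProductSpace ℝ E]
    (α : Fin n → E) (hind : LinearIndependent ℝ α)
    (A : Matrix (Fin n) (Fin n) ℝ)
    (hA : ∀ k l, A k l = 2 * (inner ℝ (α k) (α l) : ℝ) / (inner ℝ (α l) (α l) : ℝ))
    (hconn : (SimpleGraph.fromRel (fun k l => A k l ≠ 0)).Connected)
    (Λ : Multiset (Fin n → ℝ))
    (hinv : ∀ k : Fin n, Multiset.map (fun μ m => μ m - μ k * A k m) Λ = Λ)
    (i j : Fin n)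
    (hlongi : ∀ k, ‖α k‖ ≤ ‖α i‖) (hlongj : ∀ k, ‖α k‖ ≤ ‖α j‖) :
    (Λ.map (fun μ => μ i ^ 2)).sum = (Λ.map (fun μ => μ j ^ 2)).sum := by
  have hconst : (Λ.map fun μ => μ i ^ 2).sum * ‖α i‖ ^ 2
      = (Λ.map fun μ => μ j ^ 2).sum * ‖α j‖ ^ 2 :=
    (hconn.preconnected i j).eq_of_forall_adj
      (f := fun k => (Λ.map fun μ => μ k ^ 2).sum * ‖α k‖ ^ 2) fun _ _ hadj =>
      sum_sq_mul_norm_sq_eq_of_cartan_ne_zero hA hinv ((SimpleGraph.fromRel_adj _ _ _).mp hadj).2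
  have hnorm : ‖α i‖ = ‖α j‖ := le_antisymm (hlongj i) (hlongi j)
  have hj : ‖α j‖ ^ 2 ≠ 0 := pow_ne_zero 2 (norm_ne_zero_iff.mpr (hind.ne_zero j))
  rw [hnorm] at hconst
  exact mul_right_cancel₀ hj hconst

/-- Well-definedness of `x_j(λ)` (Proposition 4.1): for an irreducible finite-type Cartan matrix
`A` realized by linearly independent simple roots `α` in a Euclidean space, a multiset `Λ`
invariant under all simple reflections, and two long simple roots `α_i`, `α_j` (of maximal
length), `∑_{μ∈Λ} μ_i² = ∑_{μ∈Λ} μ_j²`. -/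
theorem stmt15 (n : ℕ) (E : Type*) [NormedAddCommGroup E] [InnerProductSpace ℝ E]
    (α : Fin n → E) (hind : LinearIndependent ℝ α)
    (A : Matrix (Fin n) (Fin n) ℝ)
    (hA : ∀ k l, A k l = 2 * (inner ℝ (α k) (α l) : ℝ) / (inner ℝ (α l) (α l) : ℝ))
    (hint : ∀ k l, ∃ m : ℤ, A k l = (m : ℝ))
    (hneg : ∀ k l, k ≠ l → A k l ≤ 0)
    (hconn : (SimpleGraph.fromRel (fun k l => A k l ≠ 0)).Connected)
    (Λ : Multiset (Fin n → ℝ))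
    (hinv : ∀ k : Fin n, Multiset.map (fun μ m => μ m - μ k * A k m) Λ = Λ)
    (i j : Fin n)
    (hlongi : ∀ k, ‖α k‖ ≤ ‖α i‖) (hlongj : ∀ k, ‖α k‖ ≤ ‖α j‖) :
    (Λ.map (fun μ => μ i ^ 2)).sum = (Λ.map (fun μ => μ j ^ 2)).sum :=
  stmt15_general n E α hind A hA hconn Λ hinv i j hlongi hlongj
end

section
/- Let A be an irreducible Cartan matrix of finite type with symmetrization A = DS (D diagonal positive, S symmetric positive definite), and let Λ be a finite multiset of vectors in ℝⁿ, not all coordinates zero, invariant under all simple reflections s_i(μ)_k = μ_k - μ_i A_{ik}. Then the matrix S(Λ)_{ij} = Σ_{μ∈Λ} μ_i μ_j is invertible. -/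
/-- Invertibility of `S(Λ)` (consequence of Theorem 1.2): for an irreducible finite-type Cartan
matrix `A` with symmetrization `A = D·S` (`D` diagonal positive, `S` symmetric positive
definite), and a finite multiset `Λ` of weight vectors, not all coordinates zero, invariant
under all simple reflections, the matrix `S(Λ)_{ij} = ∑_{μ∈Λ} μ_i μ_j` is invertible. -/
theorem stmt18 (n : ℕ) (hn : 0 < n)
    (A D S : Matrix (Fin n) (Fin n) ℝ)
    (hdiag : ∀ k, A k k = 2)
    (hneg : ∀ k l, k ≠ l → A k l ≤ 0)
    (hint : ∀ k l, ∃ m : ℤ, A k l = (m : ℝ))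
    (hconn : (SimpleGraph.fromRel (fun k l => A k l ≠ 0)).Connected)
    (hDdiag : ∀ k l, k ≠ l → D k l = 0) (hDpos : ∀ k, 0 < D k k)
    (hSsymm : S.IsSymm) (hSpd : S.PosDef)
    (hDS : A = D * S)
    (Λ : Multiset (Fin n → ℝ))
    (hinv : ∀ k : Fin n, Multiset.map (fun μ m => μ m - μ k * A k m) Λ = Λ)
    (hnontriv : ∃ μ ∈ Λ, ∃ k, μ k ≠ 0) :
    IsUnit (Matrix.of (fun i j : Fin n => (Λ.map (fun μ => μ i * μ j)).sum)) := by
  set M : Fin n → Fin n → ℝ := fun i j => (Λ.map (fun μ => μ i * μ j)).sum with hMdef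
  -- A i j = D i i * S i j
  have hA : ∀ k l, A k l = D k k * S k l := by
    intro k l
    rw [hDS, Matrix.mul_apply, Finset.sum_eq_single k]
    · intro b _ hb
      rw [hDdiag k b (Ne.symm hb), zero_mul]
    · intro h; exact absurd (Finset.mem_univ k) h
  have hzero : ∀ k l, A k l = 0 ↔ A l k = 0 := by
    intro k l
    rw [hA, hA, hSsymm.apply l k]
    constructor <;> intro h <;> rcases mul_eq_zero.1 h with h' | h' <;>
      first
        | exact absurd h' (ne_of_gt (hDpos _))
        | simp [h']
  -- symmetry of M
  have hMsymm : ∀ i j, M i j = M j i := by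
    intro i j
    simp only [hMdef]
    congr 1
    exact Multiset.map_congr rfl (fun μ _ => mul_comm _ _)
  -- key reflection identity
  have hrel : ∀ k j, M k j = A k j * M k k / 2 := by
    have key : ∀ k i j : Fin n,
        -(A k i) * M k j + (-(A k j)) * M i k + (A k i * A k j) * M k k = 0 := by
      intro k i j
      have h1 : ((Λ.map (fun μ m => μ m - μ k * A k m)).map (fun μ => μ i * μ j)).sum
          = M i j := by rw [hinv k]
      rw [Multiset.map_map] at h1
      have h2 : (Λ.map (fun μ => (μ i - μ k * A k i) * (μ j - μ k * A k j))).sum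
          = M i j := h1
      have h3 : (Λ.map (fun μ => (μ i - μ k * A k i) * (μ j - μ k * A k j))).sum
          = M i j + (-(A k i) * M k j + ((-(A k j)) * M i k
              + (A k i * A k j) * M k k)) := by
        have hexp : ∀ μ : Fin n → ℝ,
            (μ i - μ k * A k i) * (μ j - μ k * A k j)
            = μ i * μ j + (-(A k i) * (μ k * μ j) + ((-(A k j)) * (μ i * μ k)
                + (A k i * A k j) * (μ k * μ k))) := by intro μ; ring
        rw [Multiset.map_congr rfl (fun μ _ => hexp μ)]
        rw [Multiset.sum_map_add, Multiset.sum_map_add, Multiset.sum_map_add,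
          Multiset.sum_map_mul_left, Multiset.sum_map_mul_left,
          Multiset.sum_map_mul_left]
      rw [h2] at h3
      linarith
    intro k j
    have := key k k j
    rw [hdiag k, hMsymm k k] at this
    linarith
  -- nonnegativity of diagonal
  have hMnn : ∀ k, 0 ≤ M k k := by
    intro k
    apply Multiset.sum_nonneg
    intro x hx
    obtain ⟨μ, _, rfl⟩ := Multiset.mem_map.1 hx
    exact mul_self_nonneg _
  -- positivity base
  obtain ⟨μ0, hμ0Λ, k0, hk0⟩ := hnontriv
  have hbase : 0 < M k0 k0 := by
    have hmem : μ0 k0 * μ0 k0 ∈ Λ.map (fun μ => μ k0 * μ k0) :=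
      Multiset.mem_map_of_mem _ hμ0Λ
    have hle : μ0 k0 * μ0 k0 ≤ M k0 k0 := by
      apply Multiset.single_le_sum _ _ hmem
      intro x hx
      obtain ⟨μ, _, rfl⟩ := Multiset.mem_map.1 hx
      exact mul_self_nonneg _
    have : 0 < μ0 k0 * μ0 k0 := mul_self_pos.2 hk0
    linarith
  -- propagation step
  have hstep : ∀ k j : Fin n, k ≠ j → A k j ≠ 0 → 0 < M k k → 0 < M j j := by
    intro k j hkj hA0 hk
    have hAkj : A k j < 0 := lt_of_le_of_ne (hneg k j hkj) hA0
    have hAjk : A j k < 0 := by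
      have : A j k ≠ 0 := fun h => hA0 ((hzero k j).2 h)
      exact lt_of_le_of_ne (hneg j k hkj.symm) this
    have h1 := hrel k j
    have h2 := hrel j k
    have h3 := hMsymm k j
    have hEq : A j k * M j j = A k j * M k k := by linarith
    have hLHS : A k j * M k k < 0 := mul_neg_of_neg_of_pos hAkj hk
    by_contra hcon
    push_neg at hcon
    have : 0 ≤ A j k * M j j := mul_nonneg_of_nonpos_of_nonpos hAjk.le hcon
    linarith
  -- walk induction
  have hwalk : ∀ {a b : Fin n},
      (SimpleGraph.fromRel (fun k l => A k l ≠ 0)).Walk a b → 0 < M a a → 0 < M b b := by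
    intro a b w
    induction w with
    | nil => exact id
    | @cons a c b h p ih =>
      intro ha
      apply ih
      rw [SimpleGraph.fromRel_adj] at h
      obtain ⟨hne, h' | h'⟩ := h
      · exact hstep a c hne h' ha
      · exact hstep a c hne (fun h0 => h' ((hzero a c).1 h0)) ha
  have hMpos : ∀ j, 0 < M j j := by
    intro j
    obtain ⟨w⟩ := hconn.preconnected k0 j
    exact hwalk w hbase
  -- M = diagonal e * S
  have hfact : Matrix.of M = Matrix.diagonal (fun k => D k k * M k k / 2) * S := by
    ext i j
    rw [Matrix.diagonal_mul]
    show M i j = D i i * M i i / 2 * S i j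
    rw [hrel i j, hA]
    ring
  rw [Matrix.isUnit_iff_isUnit_det]
  show IsUnit (Matrix.of M).det
  rw [hfact, Matrix.det_mul, Matrix.det_diagonal]
  rw [isUnit_iff_ne_zero]
  apply mul_ne_zero
  · apply Finset.prod_ne_zero_iff.2
    intro i _
    have := hDpos i; have := hMpos i
    positivity
  · exact hSpd.det_pos.ne'
end
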